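/- Let A|B be an H-separable extension of simple rings with A_B finitely generated projective, and let D be an intermediate simple ring B ⊆ D ⊆ A such that D is a right relatively separable extension of B in A (i.e., the multiplication map A ⊗_B D → A splits as an A-D-bimodule epimorphism). Then A ⊗_D A is isomorphic to a direct summand of A ⊗_B A as A-A-bimodules; consequently A|D is H-separable. -/

import Mathlib

open TensorProduct

noncomputable section

namespace D2

variable (A : Type*) [Ring A] (B : Subring A)

/-- The defining relations of `A ⊗_B A` as a quotient of `A ⊗_ℤ A`. -/
def relSub : Submodule ℤ (A ⊗[ℤ] A) :=
  Submodule.span ℤ {x | ∃ (a c : A) (b : B), x = (a * (b : A)) ⊗ₜ[ℤ] c - a ⊗ₜ[ℤ] ((b : A) * c)}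

/-- The tensor square `A ⊗_B A` of a ring extension `B ⊆ A`. -/
abbrev TensorSq := (A ⊗[ℤ] A) ⧸ relSub A B

/-- The class of a simple tensor `a ⊗_B c`. -/
def tmulB (a c : A) : TensorSq A B := Submodule.Quotient.mk (a ⊗ₜ[ℤ] c)

/-- Left multiplication `a₀ • (x ⊗ y) = (a₀ x) ⊗ y` on `A ⊗_B A`. -/
def lmul (a : A) : TensorSq A B →ₗ[ℤ] TensorSq A B :=
  Submodule.mapQ _ _ (TensorProduct.map (LinearMap.mulLeft ℤ a) LinearMap.id) (by
    rw [relSub, Submodule.span_le]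
    rintro x ⟨a', c, b, rfl⟩
    simp only [SetLike.mem_coe, Submodule.mem_comap, map_sub, TensorProduct.map_tmul,
      LinearMap.mulLeft_apply, LinearMap.id_apply]
    refine Submodule.subset_span ⟨a * a', c, b, ?_⟩
    erw [map_sub, TensorProduct.map_tmul, TensorProduct.map_tmul]
    simp only [LinearMap.mulLeft_apply, LinearMap.id_apply, mul_assoc])

/-- Right multiplication `(x ⊗ y) • a₀ = x ⊗ (y a₀)` on `A ⊗_B A`. -/
def rmul (a : A) : TensorSq A B →ₗ[ℤ] TensorSq A B :=
  Submodule.mapQ _ _ (TensorProduct.map LinearMap.id (LinearMap.mulRight ℤ a)) (by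
    rw [relSub, Submodule.span_le]
    rintro x ⟨a', c, b, rfl⟩
    simp only [SetLike.mem_coe, Submodule.mem_comap, map_sub, TensorProduct.map_tmul,
      LinearMap.mulRight_apply, LinearMap.id_apply]
    refine Submodule.subset_span ⟨a', c * a, b, ?_⟩
    erw [map_sub, TensorProduct.map_tmul, TensorProduct.map_tmul]
    simp only [LinearMap.mulRight_apply, LinearMap.id_apply, mul_assoc])

/-- The multiplication map `A ⊗_B A → A`, `x ⊗ y ↦ x y`. -/
def mulQ : TensorSq A B →ₗ[ℤ] A :=
  Submodule.liftQ _ (LinearMap.mul' ℤ A) (by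
    rw [relSub, Submodule.span_le]
    rintro x ⟨a, c, b, rfl⟩
    erw [SetLike.mem_coe, LinearMap.mem_ker, map_sub, LinearMap.mul'_apply, LinearMap.mul'_apply]
    rw [mul_assoc, sub_self])

/-- An element `t` of `A ⊗_B A` is `B`-central when `b t = t b` for all `b ∈ B`. -/
def IsBCentral (t : TensorSq A B) : Prop := ∀ b ∈ B, lmul A B b t = rmul A B b t

/-- An element `t` of `A ⊗_B A` is `A`-central (a Casimir element) when `a t = t a`. -/
def IsACentral (t : TensorSq A B) : Prop := ∀ a : A, lmul A B a t = rmul A B a t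

/-- A `B`-`B`-bimodule endomorphism of `A`. -/
def IsBB (α : A →ₗ[ℤ] A) : Prop :=
  ∀ b ∈ B, ∀ a : A, α ((b : A) * a) = b * α a ∧ α (a * b) = α a * b

/-- A right `B`-module endomorphism of `A`. -/
def IsRightB (f : A →ₗ[ℤ] A) : Prop := ∀ a : A, ∀ b ∈ B, f (a * b) = f a * b

/-- `x ↦ (x·) ⊗ id` as a linear map, used to build Sweedler-type expressions. -/
def lmulTen : A →ₗ[ℤ] (A ⊗[ℤ] A) →ₗ[ℤ] (A ⊗[ℤ] A) where
  toFun a := TensorProduct.map (LinearMap.mulLeft ℤ a) LinearMap.id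
  map_add' a a' := by
    apply TensorProduct.ext'
    intro x y
    simp [add_mul, TensorProduct.add_tmul]
    erw [LinearMap.add_apply, TensorProduct.map_tmul, TensorProduct.map_tmul]
    rfl
  map_smul' z a := by
    apply TensorProduct.ext'
    intro x y
    simp only [TensorProduct.map_tmul, LinearMap.mulLeft_apply, LinearMap.id_apply,
      LinearMap.smul_apply, RingHom.id_apply, smul_mul_assoc, TensorProduct.smul_tmul']
    erw [LinearMap.smul_apply, TensorProduct.map_tmul]
    rfl

/-- For `ζ = Σ u ⊗ v`, the map `a ↦ Σ α(a u) v`, i.e. `α(? ζ¹) ζ²`. -/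
def sweed (α : A →ₗ[ℤ] A) (ζ : A ⊗[ℤ] A) : A →ₗ[ℤ] A :=
  ((LinearMap.mul' ℤ A).comp (TensorProduct.map α LinearMap.id)).comp ((lmulTen A).flip ζ)

/-- For `ζ = Σ u ⊗ v`, the element `Σ u r v` ("sandwich" evaluation `ζ¹ r ζ²`). -/
def sandw (r : A) (ζ : A ⊗[ℤ] A) : A :=
  (LinearMap.mul' ℤ A) ((TensorProduct.map (LinearMap.mulRight ℤ r) LinearMap.id) ζ)

/-- `mul₂ ζ ξ = Σ (u x) ⊗ (y v)` for `ζ = Σ u ⊗ v`, `ξ = Σ x ⊗ y`: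
the product `ξ ·_T ζ` of two elements of `T = (A ⊗_B A)^B` on representatives. -/
def mul₂ : (A ⊗[ℤ] A) →ₗ[ℤ] (A ⊗[ℤ] A) →ₗ[ℤ] (A ⊗[ℤ] A) :=
  TensorProduct.lift <| LinearMap.mk₂ ℤ
    (fun u v => TensorProduct.map (LinearMap.mulLeft ℤ u) (LinearMap.mulRight ℤ v))
    (fun u u' v => by
      apply TensorProduct.ext'
      intro x y
      simp [add_mul, TensorProduct.add_tmul]
      erw [LinearMap.add_apply, TensorProduct.map_tmul, TensorProduct.map_tmul]
      rfl)
    (fun z u v => by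
      apply TensorProduct.ext'
      intro x y
      simp only [TensorProduct.map_tmul, LinearMap.mulLeft_apply, LinearMap.mulRight_apply,
        LinearMap.smul_apply, smul_mul_assoc, TensorProduct.smul_tmul']
      erw [LinearMap.smul_apply, TensorProduct.map_tmul]
      rfl)
    (fun u v v' => by
      apply TensorProduct.ext'
      intro x y
      simp [mul_add, TensorProduct.tmul_add]
      erw [LinearMap.add_apply, TensorProduct.map_tmul, TensorProduct.map_tmul]
      rfl)
    (fun z u v => by
      apply TensorProduct.ext'
      intro x y
      simp only [TensorProduct.map_tmul, LinearMap.mulLeft_apply, LinearMap.mulRight_apply,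
        LinearMap.smul_apply, mul_smul_comm, TensorProduct.tmul_smul]
      erw [LinearMap.smul_apply, TensorProduct.map_tmul]
      rfl)

/-- `A` is balanced as a right `B`-module. -/
def RightBalanced : Prop :=
  ∀ φ : A →+ A,
    (∀ f : A →+ A, (∀ a : A, ∀ b ∈ B, f (a * b) = f a * b) → ∀ a, φ (f a) = f (φ a)) →
    ∃ b ∈ B, ∀ a, φ a = a * b

end D2

end



noncomputable section Stmt19Aux
open TensorProduct

variable (A : Type*) [Ring A] (S : Subring A)

/-- Ext lemma for linear maps out of `TensorSq`. -/
theorem TSq.hom_ext {M : Type*} [AddCommGroup M] [Module ℤ M]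
    {f g : D2.TensorSq A S →ₗ[ℤ] M}
    (h : ∀ x y : A, f (Submodule.Quotient.mk (x ⊗ₜ[ℤ] y))
        = g (Submodule.Quotient.mk (x ⊗ₜ[ℤ] y))) : f = g :=
  Submodule.linearMap_qext _ (TensorProduct.ext' h)

theorem TSq.lmul_tmul (a x y : A) :
    D2.lmul A S a (Submodule.Quotient.mk (x ⊗ₜ[ℤ] y)) =
      Submodule.Quotient.mk ((a * x) ⊗ₜ[ℤ] y) := by
  exact congrArg Submodule.Quotient.mk (TensorProduct.map_tmul _ _ x y)

theorem TSq.rmul_tmul (a x y : A) :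
    D2.rmul A S a (Submodule.Quotient.mk (x ⊗ₜ[ℤ] y)) =
      Submodule.Quotient.mk (x ⊗ₜ[ℤ] (y * a)) := by
  exact congrArg Submodule.Quotient.mk (TensorProduct.map_tmul _ _ x y)

theorem TSq.mulQ_mk (w : A ⊗[ℤ] A) :
    D2.mulQ A S (Submodule.Quotient.mk w) = LinearMap.mul' ℤ A w := rfl

theorem TSq.lmul_lmul (a a' : A) (t : D2.TensorSq A S) :
    D2.lmul A S a (D2.lmul A S a' t) = D2.lmul A S (a * a') t :=
  DFunLike.congr_fun (TSq.hom_ext A S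
    (f := (D2.lmul A S a).comp (D2.lmul A S a')) (g := D2.lmul A S (a * a'))
    (fun x y => by simp [TSq.lmul_tmul, mul_assoc])) t

theorem TSq.rmul_rmul (a a' : A) (t : D2.TensorSq A S) :
    D2.rmul A S a (D2.rmul A S a' t) = D2.rmul A S (a' * a) t :=
  DFunLike.congr_fun (TSq.hom_ext A S
    (f := (D2.rmul A S a).comp (D2.rmul A S a')) (g := D2.rmul A S (a' * a))
    (fun x y => by simp [TSq.rmul_tmul, mul_assoc])) t

theorem TSq.lmul_rmul (a a' : A) (t : D2.TensorSq A S) :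
    D2.lmul A S a (D2.rmul A S a' t) = D2.rmul A S a' (D2.lmul A S a t) :=
  DFunLike.congr_fun (TSq.hom_ext A S
    (f := (D2.lmul A S a).comp (D2.rmul A S a')) (g := (D2.rmul A S a').comp (D2.lmul A S a))
    (fun x y => by simp [TSq.rmul_tmul, TSq.lmul_tmul])) t

theorem TSq.lmul_add (a a' : A) (t : D2.TensorSq A S) :
    D2.lmul A S (a + a') t = D2.lmul A S a t + D2.lmul A S a' t :=
  DFunLike.congr_fun (TSq.hom_ext A S
    (f := D2.lmul A S (a + a')) (g := D2.lmul A S a + D2.lmul A S a')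
    (fun x y => by
      simp [TSq.lmul_tmul, add_mul, ← Submodule.Quotient.mk_add, TensorProduct.add_tmul])) t

theorem TSq.rmul_add (a a' : A) (t : D2.TensorSq A S) :
    D2.rmul A S (a + a') t = D2.rmul A S a t + D2.rmul A S a' t :=
  DFunLike.congr_fun (TSq.hom_ext A S
    (f := D2.rmul A S (a + a')) (g := D2.rmul A S a + D2.rmul A S a')
    (fun x y => by
      simp [TSq.rmul_tmul, mul_add, ← Submodule.Quotient.mk_add, TensorProduct.tmul_add])) t

/-- `a ↦ lmul a t` as an additive hom. -/
def TSq.lmulHom (t : D2.TensorSq A S) : A →+ D2.TensorSq A S :=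
  AddMonoidHom.mk' (fun a => D2.lmul A S a t) (fun a a' => TSq.lmul_add A S a a' t)

def TSq.rmulHom (t : D2.TensorSq A S) : A →+ D2.TensorSq A S :=
  AddMonoidHom.mk' (fun a => D2.rmul A S a t) (fun a a' => TSq.rmul_add A S a a' t)

theorem TSq.lmul_zsmul (z : ℤ) (a : A) (t : D2.TensorSq A S) :
    D2.lmul A S (z • a) t = z • D2.lmul A S a t :=
  (TSq.lmulHom A S t).map_zsmul z a

theorem TSq.rmul_zsmul (z : ℤ) (a : A) (t : D2.TensorSq A S) :
    D2.rmul A S (z • a) t = z • D2.rmul A S a t :=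
  (TSq.rmulHom A S t).map_zsmul z a

theorem TSq.lmul_zero (t : D2.TensorSq A S) : D2.lmul A S 0 t = 0 :=
  (TSq.lmulHom A S t).map_zero


theorem relSub_mono {B D : Subring A} (h : B ≤ D) : D2.relSub A B ≤ D2.relSub A D := by
  rw [D2.relSub, Submodule.span_le]
  rintro x ⟨a, c, b, rfl⟩
  exact Submodule.subset_span ⟨a, c, ⟨(b : A), h b.2⟩, rfl⟩

/-- The canonical projection `A ⊗_B A → A ⊗_D A` for `B ≤ D`. -/
def gmap {B D : Subring A} (h : B ≤ D) : D2.TensorSq A B →ₗ[ℤ] D2.TensorSq A D :=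
  Submodule.mapQ _ _ LinearMap.id (fun x hx => relSub_mono A h hx)

theorem gmap_mk {B D : Subring A} (h : B ≤ D) (w : A ⊗[ℤ] A) :
    gmap A h (Submodule.Quotient.mk w) = Submodule.Quotient.mk w := rfl

theorem gmap_lmul {B D : Subring A} (h : B ≤ D) (a : A) (t : D2.TensorSq A B) :
    gmap A h (D2.lmul A B a t) = D2.lmul A D a (gmap A h t) :=
  DFunLike.congr_fun (TSq.hom_ext A B
    (f := (gmap A h).comp (D2.lmul A B a)) (g := (D2.lmul A D a).comp (gmap A h))
    (fun x y => by simp [TSq.lmul_tmul, gmap_mk])) t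

theorem gmap_rmul {B D : Subring A} (h : B ≤ D) (a : A) (t : D2.TensorSq A B) :
    gmap A h (D2.rmul A B a t) = D2.rmul A D a (gmap A h t) :=
  DFunLike.congr_fun (TSq.hom_ext A B
    (f := (gmap A h).comp (D2.rmul A B a)) (g := (D2.rmul A D a).comp (gmap A h))
    (fun x y => by simp [TSq.rmul_tmul, gmap_mk])) t

/-- `x ⊗ y ↦ x * r * y` as a linear map. -/
def sandwL (r : A) : A ⊗[ℤ] A →ₗ[ℤ] A :=
  (LinearMap.mul' ℤ A).comp (TensorProduct.map (LinearMap.mulRight ℤ r) LinearMap.id)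

theorem sandwL_tmul (r x y : A) : sandwL A r (x ⊗ₜ[ℤ] y) = x * r * y := rfl


theorem TSq.tmulB_def (x y : A) :
    D2.tmulB A S x y = Submodule.Quotient.mk (x ⊗ₜ[ℤ] y) := rfl

end Stmt19Aux



open TensorProduct in
/-- if `A|B` is an H-separable extension of simple rings with `A_B` f.g.
projective and `D` is an intermediate simple ring which is right relatively separable over
`B` in `A` (the multiplication `A ⊗_B D → A` splits as an `A`-`D`-bimodule epimorphism),
then `A ⊗_D A` is a direct summand of `A ⊗_B A` as `A`-`A`-bimodules; consequently `A|D`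
is H-separable. -/
theorem stmt19 {A : Type*} [Ring A] (B D : Subring A) (hBD : B ≤ D)
    (hAsimple : IsSimpleRing A) (hBsimple : IsSimpleRing B) (hDsimple : IsSimpleRing D)
    -- A_B finitely generated projective: a dual basis
    (N : ℕ) (aB : Fin N → A) (fB : Fin N → (A →ₗ[ℤ] A))
    (hfB : ∀ j, D2.IsRightB A B (fB j)) (hfBval : ∀ j a, fB j a ∈ B)
    (hdb : ∀ a : A, a = ∑ j, aB j * fB j a)
    -- H-separability system for A|B
    (n : ℕ) (e : Fin n → A ⊗[ℤ] A) (r : Fin n → A)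
    (hce : ∀ i, D2.IsACentral A B (Submodule.Quotient.mk (e i)))
    (hr : ∀ i, r i ∈ Subring.centralizer (B : Set A))
    (hsys : ∑ i, D2.lmul A B (r i) (Submodule.Quotient.mk (e i)) = D2.tmulB A B 1 1)
    -- D is right relatively separable over B in A: a section σ : A → A ⊗_B D of the
    -- multiplication map, as A-D-bimodules
    (σ : A →+ D2.TensorSq A B)
    (hσrange : ∀ a : A, σ a ∈ Submodule.map (D2.relSub A B).mkQ
      (Submodule.span ℤ {x : A ⊗[ℤ] A | ∃ (u d : A), d ∈ D ∧ x = u ⊗ₜ[ℤ] d}))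
    (hσA : ∀ a x : A, σ (a * x) = D2.lmul A B a (σ x))
    (hσD : ∀ x : A, ∀ d ∈ D, σ (x * d) = D2.rmul A B d (σ x))
    (hσsec : ∀ x : A, D2.mulQ A B (σ x) = x) :
    (∃ (f : D2.TensorSq A D →+ D2.TensorSq A B) (g : D2.TensorSq A B →+ D2.TensorSq A D),
      (∀ (a : A) (x), f (D2.lmul A D a x) = D2.lmul A B a (f x)) ∧
      (∀ (a : A) (x), f (D2.rmul A D a x) = D2.rmul A B a (f x)) ∧
      (∀ (a : A) (x), g (D2.lmul A B a x) = D2.lmul A D a (g x)) ∧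
      (∀ (a : A) (x), g (D2.rmul A B a x) = D2.rmul A D a (g x)) ∧
      (∀ x, g (f x) = x)) ∧
    (∃ (m : ℕ) (ξ : Fin m → A ⊗[ℤ] A) (s : Fin m → A),
      (∀ i, D2.IsACentral A D (Submodule.Quotient.mk (ξ i))) ∧
      (∀ i, s i ∈ Subring.centralizer (D : Set A)) ∧
      ∑ i, D2.lmul A D (s i) (Submodule.Quotient.mk (ξ i)) = D2.tmulB A D 1 1) := by
  classical
  -- the "sandwich" maps on the quotient
  have hrcomm : ∀ i, ∀ b ∈ B, (b : A) * r i = r i * b := fun i =>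
    Subring.mem_centralizer_iff.mp (hr i)
  have Φker : ∀ i, D2.relSub A B ≤ LinearMap.ker (sandwL A (r i)) := by
    intro i
    rw [D2.relSub, Submodule.span_le]
    rintro x ⟨a, c, b, rfl⟩
    simp only [SetLike.mem_coe, LinearMap.mem_ker, map_sub, sandwL_tmul]
    rw [sub_eq_zero, mul_assoc a (b : A) (r i), hrcomm i b b.2]
    simp only [mul_assoc]
  set Φ : Fin n → (D2.TensorSq A B →ₗ[ℤ] A) :=
    fun i => Submodule.liftQ _ (sandwL A (r i)) (Φker i) with hΦdef
  have hΦmk : ∀ i (w : A ⊗[ℤ] A), Φ i (Submodule.Quotient.mk w) = sandwL A (r i) w :=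
    fun i w => rfl
  have hΦl : ∀ i (a : A) (t : D2.TensorSq A B), Φ i (D2.lmul A B a t) = a * Φ i t :=
    fun i a => DFunLike.congr_fun (TSq.hom_ext A B
      (f := (Φ i).comp (D2.lmul A B a)) (g := (LinearMap.mulLeft ℤ a).comp (Φ i))
      (fun x y => by
        simp only [LinearMap.comp_apply, TSq.lmul_tmul, hΦmk, sandwL_tmul,
          LinearMap.mulLeft_apply, mul_assoc]))
  have hΦr : ∀ i (a : A) (t : D2.TensorSq A B), Φ i (D2.rmul A B a t) = Φ i t * a :=
    fun i a => DFunLike.congr_fun (TSq.hom_ext A B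
      (f := (Φ i).comp (D2.rmul A B a)) (g := (LinearMap.mulRight ℤ a).comp (Φ i))
      (fun x y => by
        simp only [LinearMap.comp_apply, TSq.rmul_tmul, hΦmk, sandwL_tmul,
          LinearMap.mulRight_apply, mul_assoc]))
  -- key identity in A ⊗_B A
  have keyB : ∀ x y : A, ∑ i, D2.lmul A B (x * r i * y) (Submodule.Quotient.mk (e i))
      = (Submodule.Quotient.mk (x ⊗ₜ[ℤ] y) : D2.TensorSq A B) := by
    intro x y
    have h1 : ∀ i, D2.lmul A B (x * r i * y) (Submodule.Quotient.mk (e i))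
        = D2.lmul A B x (D2.rmul A B y (D2.lmul A B (r i) (Submodule.Quotient.mk (e i)))) := by
      intro i
      rw [← TSq.lmul_lmul A B (x * r i) y, hce i y, ← TSq.lmul_lmul A B x (r i),
        TSq.lmul_rmul]
    rw [Finset.sum_congr rfl (fun i _ => h1 i), ← map_sum, ← map_sum, hsys,
      TSq.tmulB_def, TSq.rmul_tmul, TSq.lmul_tmul, one_mul, mul_one]
  have keyD : ∀ x y : A, ∑ i, D2.lmul A D (x * r i * y) (Submodule.Quotient.mk (e i))
      = (Submodule.Quotient.mk (x ⊗ₜ[ℤ] y) : D2.TensorSq A D) := by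
    intro x y
    have := congrArg (gmap A hBD) (keyB x y)
    simpa only [map_sum, gmap_lmul, gmap_mk] using this
  -- span claims
  have claim1 : ∀ w ∈ Submodule.span ℤ {x : A ⊗[ℤ] A | ∃ (u d : A), d ∈ D ∧ x = u ⊗ₜ[ℤ] d},
      ∑ i, D2.lmul A D (sandwL A (r i) w) (Submodule.Quotient.mk (e i))
        = (Submodule.Quotient.mk w : D2.TensorSq A D) := by
    intro w hw
    induction hw using Submodule.span_induction with
    | mem x hx =>
      obtain ⟨u, d, hd, rfl⟩ := hx
      simpa only [sandwL_tmul] using keyD u d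
    | zero => simp only [map_zero, TSq.lmul_zero, Finset.sum_const_zero,
        Submodule.Quotient.mk_zero]
    | add x y hx hy ihx ihy =>
      simp only [map_add, TSq.lmul_add, Finset.sum_add_distrib, ihx, ihy,
        Submodule.Quotient.mk_add]
    | smul z x hx ih =>
      simp only [map_smul, TSq.lmul_zsmul, ← Finset.smul_sum, ih,
        Submodule.Quotient.mk_smul]
  have claim2 : ∀ w ∈ Submodule.span ℤ {x : A ⊗[ℤ] A | ∃ (u d : A), d ∈ D ∧ x = u ⊗ₜ[ℤ] d},
      (Submodule.Quotient.mk w : D2.TensorSq A D)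
        = D2.tmulB A D (LinearMap.mul' ℤ A w) 1 := by
    intro w hw
    induction hw using Submodule.span_induction with
    | mem x hx =>
      obtain ⟨u, d, hd, rfl⟩ := hx
      rw [LinearMap.mul'_apply, TSq.tmulB_def, Submodule.Quotient.eq]
      refine neg_mem_iff.mp ?_
      rw [neg_sub]
      exact Submodule.subset_span ⟨u, 1, ⟨d, hd⟩, by rw [mul_one]⟩
    | zero => simp [TSq.tmulB_def]
    | add x y hx hy ihx ihy =>
      rw [Submodule.Quotient.mk_add, ihx, ihy, map_add, TSq.tmulB_def, TSq.tmulB_def,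
        TSq.tmulB_def, TensorProduct.add_tmul, Submodule.Quotient.mk_add]
    | smul z x hx ih =>
      rw [Submodule.Quotient.mk_smul, ih, map_smul, TSq.tmulB_def, TSq.tmulB_def,
        ← TensorProduct.smul_tmul']
      exact (map_zsmul (Submodule.mkQ _) z _).symm
  have claim3 : ∀ w ∈ Submodule.span ℤ {x : A ⊗[ℤ] A | ∃ (u d : A), d ∈ D ∧ x = u ⊗ₜ[ℤ] d},
      ∀ y : A, gmap A hBD (D2.rmul A B y (Submodule.Quotient.mk w))
        = (Submodule.Quotient.mk ((LinearMap.mul' ℤ A w) ⊗ₜ[ℤ] y) : D2.TensorSq A D) := by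
    intro w hw
    induction hw using Submodule.span_induction with
    | mem x hx =>
      obtain ⟨u, d, hd, rfl⟩ := hx
      intro y
      rw [TSq.rmul_tmul, gmap_mk, LinearMap.mul'_apply, Submodule.Quotient.eq]
      refine neg_mem_iff.mp ?_
      rw [neg_sub]
      exact Submodule.subset_span ⟨u, y, ⟨d, hd⟩, rfl⟩
    | zero => intro y; simp
    | add x y hx hy ihx ihy =>
      intro c
      rw [Submodule.Quotient.mk_add, map_add, map_add, ihx c, ihy c, map_add,
        TensorProduct.add_tmul, Submodule.Quotient.mk_add]
    | smul z x hx ih =>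
      intro c
      rw [Submodule.Quotient.mk_smul, map_smul, map_smul, ih c, map_smul,
        ← TensorProduct.smul_tmul']
      exact (map_zsmul (Submodule.mkQ _) z _).symm
  -- the representative of σ 1
  obtain ⟨w1, hw1mem, hw1⟩ := hσrange 1
  rw [Submodule.mkQ_apply] at hw1
  have hmul'w1 : LinearMap.mul' ℤ A w1 = 1 := by
    have : D2.mulQ A B (Submodule.Quotient.mk w1) = LinearMap.mul' ℤ A w1 := rfl
    rw [← this, hw1, hσsec 1]
  -- the H-system for A | D
  have hceD : ∀ i, D2.IsACentral A D (Submodule.Quotient.mk (e i)) := by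
    intro i a
    have := congrArg (gmap A hBD) (hce i a)
    simpa only [gmap_lmul, gmap_rmul, gmap_mk] using this
  have hsΦ : ∀ i, sandwL A (r i) w1 = Φ i (σ 1) := by
    intro i; rw [← hw1]; rfl
  have hsD : ∀ i, sandwL A (r i) w1 ∈ Subring.centralizer (D : Set A) := by
    intro i
    rw [Subring.mem_centralizer_iff]
    intro d hd
    rw [hsΦ i]
    calc d * Φ i (σ 1) = Φ i (D2.lmul A B d (σ 1)) := (hΦl i d _).symm
      _ = Φ i (σ (d * 1)) := by rw [hσA d 1]
      _ = Φ i (σ (1 * d)) := by rw [mul_one, one_mul]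
      _ = Φ i (D2.rmul A B d (σ 1)) := by rw [hσD 1 d hd]
      _ = Φ i (σ 1) * d := hΦr i d _
  have hsum : ∑ i, D2.lmul A D (sandwL A (r i) w1) (Submodule.Quotient.mk (e i))
      = D2.tmulB A D 1 1 := by
    rw [claim1 w1 hw1mem, claim2 w1 hw1mem, hmul'w1]
  -- the bimodule maps f and g
  have F0bil1 : ∀ (x x' y : A), D2.rmul A B y (σ (x + x'))
      = D2.rmul A B y (σ x) + D2.rmul A B y (σ x') := by
    intro x x' y; rw [map_add, map_add]
  have F0bil2 : ∀ (z : ℤ) (x y : A), D2.rmul A B y (σ (z • x))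
      = z • D2.rmul A B y (σ x) := by
    intro z x y; rw [map_zsmul, map_smul]
  set F0 : A ⊗[ℤ] A →ₗ[ℤ] D2.TensorSq A B := TensorProduct.lift (LinearMap.mk₂ ℤ
    (fun x y => D2.rmul A B y (σ x))
    (fun x x' y => F0bil1 x x' y)
    (fun z x y => F0bil2 z x y)
    (fun x y y' => TSq.rmul_add A B y y' (σ x))
    (fun z x y => TSq.rmul_zsmul A B z y (σ x))) with hF0def
  have hF0tmul : ∀ x y : A, F0 (x ⊗ₜ[ℤ] y) = D2.rmul A B y (σ x) := fun x y => rfl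
  have fker : D2.relSub A D ≤ LinearMap.ker F0 := by
    rw [D2.relSub, Submodule.span_le]
    rintro x ⟨a, c, b, rfl⟩
    simp only [SetLike.mem_coe, LinearMap.mem_ker, map_sub, hF0tmul]
    rw [hσD a (b : A) b.2, TSq.rmul_rmul, sub_self]
  set fL : D2.TensorSq A D →ₗ[ℤ] D2.TensorSq A B :=
    Submodule.liftQ _ F0 fker with hfLdef
  have hfLmk : ∀ w : A ⊗[ℤ] A, fL (Submodule.Quotient.mk w) = F0 w := fun w => rfl
  have hfl : ∀ (a : A) (t : D2.TensorSq A D),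
      fL (D2.lmul A D a t) = D2.lmul A B a (fL t) :=
    fun a => DFunLike.congr_fun (TSq.hom_ext A D
      (f := fL.comp (D2.lmul A D a)) (g := (D2.lmul A B a).comp fL)
      (fun x y => by
        simp only [LinearMap.comp_apply, TSq.lmul_tmul, hfLmk, hF0tmul, hσA a x,
          TSq.lmul_rmul]))
  have hfr : ∀ (a : A) (t : D2.TensorSq A D),
      fL (D2.rmul A D a t) = D2.rmul A B a (fL t) :=
    fun a => DFunLike.congr_fun (TSq.hom_ext A D
      (f := fL.comp (D2.rmul A D a)) (g := (D2.rmul A B a).comp fL)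
      (fun x y => by
        simp only [LinearMap.comp_apply, TSq.rmul_tmul, hfLmk, hF0tmul, TSq.rmul_rmul]))
  have hgf : ∀ t : D2.TensorSq A D, gmap A hBD (fL t) = t := by
    intro t
    obtain ⟨w, rfl⟩ := Submodule.Quotient.mk_surjective _ t
    induction w using TensorProduct.induction_on with
    | zero => simp only [Submodule.Quotient.mk_zero, map_zero]
    | tmul x y =>
      obtain ⟨wx, hwxmem, hwx⟩ := hσrange x
      rw [Submodule.mkQ_apply] at hwx
      have hm : LinearMap.mul' ℤ A wx = x := by
        have : D2.mulQ A B (Submodule.Quotient.mk wx) = LinearMap.mul' ℤ A wx := rfl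
        rw [← this, hwx, hσsec x]
      rw [hfLmk, hF0tmul, ← hwx, claim3 wx hwxmem y, hm]
    | add u v ihu ihv =>
      rw [Submodule.Quotient.mk_add, map_add, map_add, ihu, ihv]
  refine ⟨⟨fL.toAddMonoidHom, (gmap A hBD).toAddMonoidHom, hfl, hfr,
      fun a t => gmap_lmul A hBD a t, fun a t => gmap_rmul A hBD a t, hgf⟩,
    n, e, fun i => sandwL A (r i) w1, hceD, hsD, hsum⟩
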